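/- arXiv:0801.1569 — 3 statements merged into one kernel-verified Lean document; each statement's English description precedes it below -/
import Mathlib

section
/- (Stanley) Let A be an artinian Gorenstein graded algebra of socle degree e, and let L be a linear form whose image in A_1 is nonzero. Then A/(0 :_A L) is an artinian Gorenstein graded algebra of socle degree e-1 (with grading shifted by 1), and for all i >= 0 one has dim_k A_i = dim_k (A/(0 :_A L))_{i-1} + dim_k (A/LA)_i, where (0 :_A L) denotes the annihilator ideal {a in A : La = 0}. -/
open MvPolynomial Module

/-- The degree-`d` graded piece of the quotient `k[x₁,…,x_r]/I`, namely the image of the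
space of homogeneous polynomials of degree `d` under the quotient map. -/
noncomputable def quotPiece (k : Type) [Field k] {r : ℕ}
    (I : Ideal (MvPolynomial (Fin r) k)) (d : ℕ) :
    Submodule k (MvPolynomial (Fin r) k ⧸ I) :=
  (MvPolynomial.homogeneousSubmodule (Fin r) k d).map (Ideal.Quotient.mkₐ k I).toLinearMap

/-- The socle of `A = k[x₁,…,x_r]/I`: the annihilator in `A` of the maximal ideal
`(x₁,…,x_r)`, i.e. the set of `a ∈ A` killed by every variable. -/
noncomputable def socle (k : Type) [Field k] {r : ℕ} (I : Ideal (MvPolynomial (Fin r) k)) :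
    Submodule k (MvPolynomial (Fin r) k ⧸ I) :=
  ⨅ j : Fin r, LinearMap.ker (LinearMap.mulLeft k (Ideal.Quotient.mk I (X j)))

/-- `I` is a homogeneous ideal: it contains all homogeneous components of its elements. -/
def IsHomogeneousIdeal (k : Type) [Field k] {r : ℕ} (I : Ideal (MvPolynomial (Fin r) k)) : Prop :=
  ∀ f ∈ I, ∀ d : ℕ, MvPolynomial.homogeneousComponent d f ∈ I

/-- `A = k[x₁,…,x_r]/I` is an artinian Gorenstein graded algebra of socle degree `e`:
`I` is homogeneous, `A` is a finite-dimensional `k`-vector space, the socle of `A` is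
a `1`-dimensional `k`-vector space, and `e` is the largest degree in which `A` is nonzero. -/
structure IsArtinianGorenstein (k : Type) [Field k] {r : ℕ}
    (I : Ideal (MvPolynomial (Fin r) k)) (e : ℕ) : Prop where
  homog : IsHomogeneousIdeal k I
  finite : FiniteDimensional k (MvPolynomial (Fin r) k ⧸ I)
  socle_one : finrank k ↥(socle k I) = 1
  top_ne_bot : quotPiece k I e ≠ ⊥
  eventually_bot : ∀ d : ℕ, e < d → quotPiece k I d = ⊥

/-- `h` is a Gorenstein h-vector of codimension `r` and socle degree `e`: it is the Hilbert
function of an artinian Gorenstein graded quotient of `k[x₁,…,x_r]` by a homogeneous ideal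
containing no nonzero linear form. -/
def IsGorensteinHVector (k : Type) [Field k] (r e : ℕ) (h : ℕ → ℕ) : Prop :=
  ∃ I : Ideal (MvPolynomial (Fin r) k),
    IsArtinianGorenstein k I e ∧
    (∀ f ∈ MvPolynomial.homogeneousSubmodule (Fin r) k 1, f ∈ I → f = 0) ∧
    ∀ i : ℕ, h i = finrank k ↥(quotPiece k I i)

/-- `fei k e i r` is `f_{e,i}(r)`: the least value of `h i` over all Gorenstein h-vectors `h`
of socle degree `e` and codimension `r`. -/
noncomputable def fei (k : Type) [Field k] (e i r : ℕ) : ℕ :=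
  sInf {n : ℕ | ∃ h : ℕ → ℕ, IsGorensteinHVector k r e h ∧ h i = n}

namespace StanleyAux

variable {k : Type} [Field k] {r : ℕ}

lemma mk_mem_quotPiece {I : Ideal (MvPolynomial (Fin r) k)} {d : ℕ}
    {f : MvPolynomial (Fin r) k} (hf : f.IsHomogeneous d) :
    Ideal.Quotient.mk I f ∈ quotPiece k I d :=
  ⟨f, (mem_homogeneousSubmodule _ _).2 hf, rfl⟩

lemma mem_quotPiece_iff {I : Ideal (MvPolynomial (Fin r) k)} {d : ℕ}
    {a : MvPolynomial (Fin r) k ⧸ I} :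
    a ∈ quotPiece k I d ↔ ∃ f : MvPolynomial (Fin r) k, f.IsHomogeneous d ∧
      Ideal.Quotient.mk I f = a := by
  constructor
  · rintro ⟨f, hf, rfl⟩
    exact ⟨f, (mem_homogeneousSubmodule _ _).1 hf, rfl⟩
  · rintro ⟨f, hf, rfl⟩
    exact mk_mem_quotPiece hf

lemma quotPiece_eq_bot_iff {I : Ideal (MvPolynomial (Fin r) k)} {d : ℕ} :
    quotPiece k I d = ⊥ ↔ ∀ f : MvPolynomial (Fin r) k, f.IsHomogeneous d → f ∈ I := by
  constructor
  · intro h f hf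
    have : Ideal.Quotient.mk I f ∈ quotPiece k I d := mk_mem_quotPiece hf
    rw [h, Submodule.mem_bot] at this
    exact Ideal.Quotient.eq_zero_iff_mem.1 this
  · intro h
    rw [eq_bot_iff]
    rintro a ha
    obtain ⟨f, hf, rfl⟩ := mem_quotPiece_iff.1 ha
    exact (Submodule.mem_bot k).2 (Ideal.Quotient.eq_zero_iff_mem.2 (h f hf))

/-- homogeneous component of a product with a linear form -/
lemma hc_mul {L : MvPolynomial (Fin r) k} (hL : L.IsHomogeneous 1)
    (f : MvPolynomial (Fin r) k) (n : ℕ) :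
    homogeneousComponent (n + 1) (f * L) = homogeneousComponent n f * L := by
  conv_lhs => rw [← sum_homogeneousComponent f]
  rw [Finset.sum_mul, map_sum]
  have hcong : ∀ i ∈ Finset.range (f.totalDegree + 1),
      homogeneousComponent (n + 1) (homogeneousComponent i f * L)
        = if i = n then homogeneousComponent i f * L else 0 := by
    intro i _
    have hmem : homogeneousComponent i f * L ∈ homogeneousSubmodule (Fin r) k (i + 1) :=
      (mem_homogeneousSubmodule _ _).2 ((homogeneousComponent_isHomogeneous i f).mul hL)
    rw [homogeneousComponent_of_mem hmem]
    exact if_congr (by omega) rfl rfl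
  rw [Finset.sum_congr rfl hcong, Finset.sum_ite_eq' (Finset.range (f.totalDegree + 1)) n]
  split
  · rfl
  · next h =>
    rw [homogeneousComponent_eq_zero n f (by simpa [Finset.mem_range] using h), zero_mul]

lemma isHomogeneous_listProd (l : List (Fin r)) :
    ((l.map X).prod : MvPolynomial (Fin r) k).IsHomogeneous l.length := by
  induction l with
  | nil => simpa using isHomogeneous_one (Fin r) k
  | cons j t ih =>
    simp only [List.map_cons, List.prod_cons, List.length_cons]
    simpa [Nat.add_comm] using (isHomogeneous_X k j).mul ih

lemma mem_socle_iff {K : Ideal (MvPolynomial (Fin r) k)} {a : MvPolynomial (Fin r) k ⧸ K} :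
    a ∈ socle k K ↔ ∀ j : Fin r, Ideal.Quotient.mk K (X j) * a = 0 := by
  simp only [socle, Submodule.mem_iInf, LinearMap.mem_ker, LinearMap.mulLeft_apply]

/-- The key induction: from a nonzero element killed by all products of `n` variables,
produce a nonzero socle element of the form (monomial)·b. -/
lemma exists_socle_elem (K : Ideal (MvPolynomial (Fin r) k)) :
    ∀ (n : ℕ) (b : MvPolynomial (Fin r) k ⧸ K), b ≠ 0 →
    (∀ l : List (Fin r), l.length = n → Ideal.Quotient.mk K (l.map X).prod * b = 0) →
    ∃ l : List (Fin r), Ideal.Quotient.mk K (l.map X).prod * b ≠ 0 ∧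
      Ideal.Quotient.mk K (l.map X).prod * b ∈ socle k K := by
  intro n
  induction n with
  | zero =>
    intro b hb h
    exact absurd (by simpa only [List.map_nil, List.prod_nil, map_one, one_mul] using h [] rfl) hb
  | succ n ih =>
    intro b hb h
    by_cases hcase : ∀ j : Fin r, Ideal.Quotient.mk K (X j) * b = 0
    · refine ⟨[], by simpa only [List.map_nil, List.prod_nil, map_one, one_mul] using hb, ?_⟩
      simpa only [mem_socle_iff, List.map_nil, List.prod_nil, map_one, one_mul] using hcase
    · push_neg at hcase
      obtain ⟨j, hj⟩ := hcase
      have key : ∀ l : List (Fin r),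
          Ideal.Quotient.mk K (l.map X).prod * (Ideal.Quotient.mk K (X j) * b)
            = Ideal.Quotient.mk K (((j :: l).map X).prod) * b := by
        intro l
        simp only [List.map_cons, List.prod_cons, map_mul]
        ring
      obtain ⟨l, h1, h2⟩ := ih (Ideal.Quotient.mk K (X j) * b) hj (fun l hl => by
        rw [key l]
        exact h (j :: l) (by simp [hl]))
      rw [key l] at h1 h2
      exact ⟨j :: l, h1, h2⟩

section Maps

variable (I : Ideal (MvPolynomial (Fin r) k)) (L : MvPolynomial (Fin r) k)

/-- Multiplication by `L` as a `k`-linear map `R/(I:L) → R/I`. -/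
noncomputable def Phi :
    (MvPolynomial (Fin r) k ⧸ Submodule.colon I (Ideal.span {L})) →ₗ[k]
      (MvPolynomial (Fin r) k ⧸ I) :=
  LinearMap.restrictScalars k
    (Submodule.liftQ (Submodule.colon I (Ideal.span {L}))
      ((Submodule.mkQ I).comp (LinearMap.mulLeft (MvPolynomial (Fin r) k) L))
      (by
        intro f hf
        simp only [LinearMap.mem_ker, LinearMap.comp_apply, LinearMap.mulLeft_apply,
          Submodule.mkQ_apply, Submodule.Quotient.mk_eq_zero]
        rw [mul_comm]
        exact Ideal.mem_colon_span_singleton.1 hf))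

lemma Phi_mk (f : MvPolynomial (Fin r) k) :
    Phi I L (Ideal.Quotient.mk (Submodule.colon I (Ideal.span {L})) f)
      = Ideal.Quotient.mk I (L * f) := rfl

lemma Phi_injective : Function.Injective (Phi I L) := by
  intro a b hab
  obtain ⟨f, rfl⟩ := Ideal.Quotient.mk_surjective a
  obtain ⟨g, rfl⟩ := Ideal.Quotient.mk_surjective b
  rw [Phi_mk, Phi_mk, Ideal.Quotient.mk_eq_mk_iff_sub_mem] at hab
  rw [Ideal.Quotient.mk_eq_mk_iff_sub_mem]
  exact Ideal.mem_colon_span_singleton.2 (by rwa [sub_mul, mul_comm f L, mul_comm g L])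

lemma Phi_mul (g : MvPolynomial (Fin r) k)
    (c : MvPolynomial (Fin r) k ⧸ Submodule.colon I (Ideal.span {L})) :
    Phi I L (Ideal.Quotient.mk _ g * c) = Ideal.Quotient.mk I g * Phi I L c := by
  obtain ⟨f, rfl⟩ := Ideal.Quotient.mk_surjective c
  rw [← map_mul, Phi_mk, Phi_mk, ← map_mul]
  ring_nf

/-- The projection `R/I → R/(I + (L))` as a `k`-linear map. -/
noncomputable def Pi' :
    (MvPolynomial (Fin r) k ⧸ I) →ₗ[k] (MvPolynomial (Fin r) k ⧸ (I ⊔ Ideal.span {L})) :=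
  LinearMap.restrictScalars k
    (Submodule.liftQ I (Submodule.mkQ (I ⊔ Ideal.span {L}))
      (by rw [Submodule.ker_mkQ]; exact le_sup_left))

lemma Pi_mk (f : MvPolynomial (Fin r) k) :
    Pi' I L (Ideal.Quotient.mk I f) = Ideal.Quotient.mk (I ⊔ Ideal.span {L}) f := rfl

set_option maxHeartbeats 1000000 in
lemma dim_split (hhom : IsHomogeneousIdeal k I)
    (hfin : FiniteDimensional k (MvPolynomial (Fin r) k ⧸ I))
    (hL : L.IsHomogeneous 1) (n : ℕ) :
    finrank k ↥(quotPiece k I (n + 1)) =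
      finrank k ↥(quotPiece k (Submodule.colon I (Ideal.span {L})) n)
        + finrank k ↥(quotPiece k (I ⊔ Ideal.span {L}) (n + 1)) := by
  haveI := hfin
  set J := Submodule.colon I (Ideal.span {L}) with hJdef
  set V := quotPiece k I (n + 1) with hVdef
  set W := (quotPiece k J n).map (Phi I L) with hWdef
  have hWV : W ≤ V := by
    rintro w ⟨u, hu, rfl⟩
    obtain ⟨f, hf, rfl⟩ := mem_quotPiece_iff.1 hu
    rw [Phi_mk]
    exact mk_mem_quotPiece (by simpa [Nat.add_comm] using hL.mul hf)
  have h1 : finrank k ↥W = finrank k ↥(quotPiece k J n) :=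
    (LinearEquiv.finrank_eq
      (Submodule.equivMapOfInjective (Phi I L) (Phi_injective I L) (quotPiece k J n))).symm
  set g : V →ₗ[k] (MvPolynomial (Fin r) k ⧸ (I ⊔ Ideal.span {L})) :=
    (Pi' I L).comp V.subtype with hgdef
  have hrange : LinearMap.range g = quotPiece k (I ⊔ Ideal.span {L}) (n + 1) := by
    rw [hgdef, LinearMap.range_comp, Submodule.range_subtype]
    apply le_antisymm
    · rintro a ⟨v, hv, rfl⟩
      obtain ⟨f, hf, rfl⟩ := mem_quotPiece_iff.1 hv
      rw [Pi_mk]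
      exact mk_mem_quotPiece hf
    · rintro a ha
      obtain ⟨f, hf, rfl⟩ := mem_quotPiece_iff.1 ha
      exact ⟨Ideal.Quotient.mk I f, mk_mem_quotPiece hf, Pi_mk I L f⟩
  have hker : LinearMap.ker g = W.comap V.subtype := by
    ext v
    simp only [LinearMap.mem_ker, hgdef, LinearMap.comp_apply, Submodule.mem_comap,
      Submodule.subtype_apply]
    constructor
    · intro hv
      obtain ⟨f, hf, hfv⟩ := mem_quotPiece_iff.1 v.2
      have hmem : f ∈ I ⊔ Ideal.span {L} := by
        rw [← hfv, Pi_mk] at hv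
        exact Ideal.Quotient.eq_zero_iff_mem.1 hv
      obtain ⟨a, ha, b, hb, hab⟩ := Submodule.mem_sup.1 hmem
      obtain ⟨c, rfl⟩ := Ideal.mem_span_singleton.1 hb
      have hf_eq : f = homogeneousComponent (n + 1) a + homogeneousComponent n c * L := by
        have h0 : homogeneousComponent (n + 1) f = f := by
          rw [homogeneousComponent_of_mem ((mem_homogeneousSubmodule _ _).2 hf), if_pos rfl]
        calc f = homogeneousComponent (n + 1) f := h0.symm
          _ = homogeneousComponent (n + 1) (a + L * c) := by rw [hab]
          _ = homogeneousComponent (n + 1) a + homogeneousComponent (n + 1) (c * L) := by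
              rw [map_add, mul_comm L c]
          _ = _ := by rw [hc_mul hL]
      have hveq : (v : MvPolynomial (Fin r) k ⧸ I)
          = Phi I L (Ideal.Quotient.mk J (homogeneousComponent n c)) := by
        rw [Phi_mk, ← hfv, Ideal.Quotient.mk_eq_mk_iff_sub_mem, hf_eq]
        have : homogeneousComponent (n + 1) a + homogeneousComponent n c * L
            - L * homogeneousComponent n c = homogeneousComponent (n + 1) a := by ring
        rw [this]
        exact hhom a ha (n + 1)
      rw [hveq]
      exact Submodule.mem_map_of_mem (mk_mem_quotPiece (homogeneousComponent_isHomogeneous n c))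
    · rintro ⟨u, hu, huv⟩
      obtain ⟨f, hf, rfl⟩ := mem_quotPiece_iff.1 hu
      rw [← huv, Phi_mk, Pi_mk]
      exact Ideal.Quotient.eq_zero_iff_mem.2
        (Submodule.mem_sup_right (Ideal.mem_span_singleton.2 ⟨f, rfl⟩))
  have h2 : finrank k ↥(LinearMap.ker g) = finrank k ↥W := by
    rw [hker]
    exact LinearEquiv.finrank_eq (Submodule.comapSubtypeEquivOfLe hWV)
  have h3 := LinearMap.finrank_range_add_finrank_ker g
  rw [hrange, h2, h1] at h3
  omega

end Maps

lemma quotPiece_zero (K : Ideal (MvPolynomial (Fin r) k)) :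
    quotPiece k K 0 = Submodule.span k {(1 : MvPolynomial (Fin r) k ⧸ K)} := by
  apply le_antisymm
  · rintro a ha
    obtain ⟨f, hf, rfl⟩ := mem_quotPiece_iff.1 ha
    have hfC : f = C (coeff 0 f) := by
      have h0 := homogeneousComponent_of_mem (m := 0) ((mem_homogeneousSubmodule _ _).2 hf)
      rw [if_pos rfl] at h0
      rw [← homogeneousComponent_zero, h0]
    have hsm : Ideal.Quotient.mk K f = (coeff 0 f) • (1 : MvPolynomial (Fin r) k ⧸ K) := by
      have h1 : f = coeff 0 f • (1 : MvPolynomial (Fin r) k) := by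
        nth_rewrite 1 [hfC]
        rw [MvPolynomial.smul_eq_C_mul, mul_one]
      nth_rewrite 1 [h1]
      show (Ideal.Quotient.mkₐ k K) _ = _
      rw [map_smul, map_one]
    rw [hsm]
    exact Submodule.smul_mem _ _ (Submodule.mem_span_singleton_self _)
  · rw [Submodule.span_le]
    intro a ha
    rw [Set.mem_singleton_iff] at ha
    subst ha
    have := mk_mem_quotPiece (I := K) (isHomogeneous_one (Fin r) k)
    rwa [map_one] at this

end StanleyAux

set_option maxHeartbeats 3000000 in
set_option synthInstance.maxHeartbeats 400000 in
open StanleyAux in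
/-- **Lemma (Stanley).** Let `A = R/I` be an artinian Gorenstein graded algebra of socle
degree `e`, and let `L` be a linear form whose image in `A₁` is nonzero. Then
`A/(0 :_A L) = R/(I : L)` is an artinian Gorenstein graded algebra of socle degree `e-1`
(its own grading being the original one shifted by 1), and for all `i ≥ 0`,
`dim_k A_i = dim_k (A/(0 :_A L))_{i-1} + dim_k (A/LA)_i` (the first summand read as `0`
for `i = 0`). -/
theorem stmt_9 (k : Type) [Field k] [Infinite k] (r e : ℕ)
    (I : Ideal (MvPolynomial (Fin r) k)) (hAG : IsArtinianGorenstein k I e)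
    (L : MvPolynomial (Fin r) k) (hL : L.IsHomogeneous 1)
    (hLne : Ideal.Quotient.mk I L ≠ 0) :
    IsArtinianGorenstein k (Submodule.colon I (Ideal.span {L})) (e - 1) ∧
    ∀ i : ℕ,
      finrank k ↥(quotPiece k I i)
        = (if i = 0 then 0
            else finrank k ↥(quotPiece k (Submodule.colon I (Ideal.span {L})) (i - 1)))
          + finrank k ↥(quotPiece k (I ⊔ Ideal.span {L}) i) := by
  classical
  haveI hfinA := hAG.finite
  set J := Submodule.colon I (Ideal.span {L}) with hJdef
  have hmemJ : ∀ f : MvPolynomial (Fin r) k, f ∈ J ↔ f * L ∈ I := fun f =>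
    Ideal.mem_colon_span_singleton
  have hLI : L ∉ I := fun h => hLne (Ideal.Quotient.eq_zero_iff_mem.2 h)
  have hhigh : ∀ (f : MvPolynomial (Fin r) k) (d : ℕ), f.IsHomogeneous d → e < d → f ∈ I := by
    intro f d hf hd
    exact quotPiece_eq_bot_iff.1 (hAG.eventually_bot d hd) f hf
  have he1 : 1 ≤ e := by
    by_contra h
    exact hLI (hhigh L 1 hL (by omega))
  have hhighJ : ∀ (f : MvPolynomial (Fin r) k) (d : ℕ), f.IsHomogeneous d → e - 1 < d → f ∈ J := by
    intro f d hf hd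
    exact (hmemJ f).2 (hhigh _ (d + 1) (hf.mul hL) (by omega))
  have hsocle : quotPiece k I e = socle k I := by
    have hle : quotPiece k I e ≤ socle k I := by
      rintro a ha
      obtain ⟨f, hf, rfl⟩ := mem_quotPiece_iff.1 ha
      rw [mem_socle_iff]
      intro j
      rw [← map_mul]
      exact Ideal.Quotient.eq_zero_iff_mem.2
        (hhigh _ (1 + e) ((isHomogeneous_X k j).mul hf) (by omega))
    apply Submodule.eq_of_le_of_finrank_le hle
    rw [hAG.socle_one]
    have hone := Submodule.one_le_finrank_iff.2 hAG.top_ne_bot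
    omega
  have hPhiInj := Phi_injective I L
  haveI hfinJ : FiniteDimensional k (MvPolynomial (Fin r) k ⧸ J) :=
    Module.Finite.of_injective (Phi I L) hPhiInj
  have honeJ : (1 : MvPolynomial (Fin r) k ⧸ J) ≠ 0 := by
    intro h
    have h1 : (1 : MvPolynomial (Fin r) k) ∈ J := by
      rw [← Ideal.Quotient.eq_zero_iff_mem]
      simpa using h
    have h2 := (hmemJ 1).1 h1
    rw [one_mul] at h2
    exact hLI h2
  have hsocJ_ne : socle k J ≠ ⊥ := by
    have hkill : ∀ l : List (Fin r), l.length = e →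
        Ideal.Quotient.mk J (l.map X).prod * 1 = 0 := by
      intro l hl
      rw [mul_one]
      have hph : ((l.map X).prod : MvPolynomial (Fin r) k).IsHomogeneous e := by
        simpa [hl] using isHomogeneous_listProd (k := k) l
      exact Ideal.Quotient.eq_zero_iff_mem.2
        ((hmemJ _).2 (hhigh _ (e + 1) (hph.mul hL) (by omega)))
    obtain ⟨l, h1, h2⟩ := exists_socle_elem J e 1 honeJ hkill
    exact (Submodule.ne_bot_iff _).2 ⟨_, h2, h1⟩
  have hsocJ : finrank k ↥(socle k J) = 1 := by
    have hmap : (socle k J).map (Phi I L) ≤ socle k I := by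
      rintro a ⟨c, hc, rfl⟩
      rw [SetLike.mem_coe, mem_socle_iff] at hc
      rw [mem_socle_iff]
      intro j
      rw [← Phi_mul, hc j, map_zero]
    have hle : finrank k ↥(socle k J) ≤ 1 := by
      calc finrank k ↥(socle k J) = finrank k ↥((socle k J).map (Phi I L)) :=
            LinearEquiv.finrank_eq (Submodule.equivMapOfInjective _ hPhiInj _)
        _ ≤ finrank k ↥(socle k I) := Submodule.finrank_mono hmap
        _ = 1 := hAG.socle_one
    have hge := Submodule.one_le_finrank_iff.2 hsocJ_ne
    omega
  have htopJ : quotPiece k J (e - 1) ≠ ⊥ := by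
    have hkill : ∀ l : List (Fin r), l.length = e →
        Ideal.Quotient.mk I (l.map X).prod * Ideal.Quotient.mk I L = 0 := by
      intro l hl
      rw [← map_mul]
      have hph : ((l.map X).prod : MvPolynomial (Fin r) k).IsHomogeneous e := by
        simpa [hl] using isHomogeneous_listProd (k := k) l
      exact Ideal.Quotient.eq_zero_iff_mem.2
        (hhigh _ (e + 1) (hph.mul hL) (by omega))
    obtain ⟨l, h1, h2⟩ := exists_socle_elem I e (Ideal.Quotient.mk I L) hLne hkill
    rw [← map_mul] at h1 h2
    rw [← hsocle] at h2
    obtain ⟨g, hg, hgc⟩ := mem_quotPiece_iff.1 h2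
    have hprodhom : ((l.map X).prod * L).IsHomogeneous (l.length + 1) :=
      (isHomogeneous_listProd l).mul hL
    have hlen : l.length + 1 = e := by
      by_contra hne
      apply h1
      have hsub : g - (l.map X).prod * L ∈ I :=
        (Ideal.Quotient.mk_eq_mk_iff_sub_mem _ _).1 hgc
      have hcomp := hAG.homog _ hsub (l.length + 1)
      rw [map_sub,
        homogeneousComponent_of_mem ((mem_homogeneousSubmodule _ _).2 hprodhom), if_pos rfl,
        homogeneousComponent_of_mem ((mem_homogeneousSubmodule _ _).2 hg),
        if_neg hne, zero_sub, neg_mem_iff] at hcomp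
      exact Ideal.Quotient.eq_zero_iff_mem.2 hcomp
    have hprodJ : (l.map X).prod ∉ J := fun h =>
      h1 (Ideal.Quotient.eq_zero_iff_mem.2 ((hmemJ _).1 h))
    rw [Submodule.ne_bot_iff]
    refine ⟨Ideal.Quotient.mk J (l.map X).prod, mk_mem_quotPiece ?_,
      fun h => hprodJ (Ideal.Quotient.eq_zero_iff_mem.1 h)⟩
    have hl' : l.length = e - 1 := by omega
    simpa [hl'] using isHomogeneous_listProd (k := k) l
  have hhomJ : IsHomogeneousIdeal k J := by
    intro f hf d
    rw [hmemJ] at hf ⊢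
    rw [← hc_mul hL]
    exact hAG.homog _ hf (d + 1)
  have hevJ : ∀ d, e - 1 < d → quotPiece k J d = ⊥ := fun d hd =>
    quotPiece_eq_bot_iff.2 fun f hf => hhighJ f d hf hd
  refine ⟨⟨hhomJ, hfinJ, hsocJ, htopJ, hevJ⟩, ?_⟩
  intro i
  match i with
  | 0 =>
    rw [if_pos rfl, zero_add]
    have h1I : (1 : MvPolynomial (Fin r) k) ∉ I := fun h =>
      hLI (by simpa using I.mul_mem_left L h)
    have h1ne : (1 : MvPolynomial (Fin r) k ⧸ I) ≠ 0 := fun h =>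
      h1I (by rw [← Ideal.Quotient.eq_zero_iff_mem]; simpa using h)
    have h1sup : (1 : MvPolynomial (Fin r) k) ∉ I ⊔ Ideal.span {L} := by
      intro h
      obtain ⟨a, ha, b, hb, hab⟩ := Submodule.mem_sup.1 h
      obtain ⟨c, rfl⟩ := Ideal.mem_span_singleton.1 hb
      have hcc : coeff 0 (L * c) = 0 := by
        have : constantCoeff (L * c) = 0 := by
          rw [map_mul, show constantCoeff L = 0 from hL.coeff_eq_zero (by simp), zero_mul]
        rwa [constantCoeff_eq] at this
      have hca : coeff 0 a = 1 := by
        have := congrArg (coeff 0) hab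
        rwa [coeff_add, hcc, add_zero, coeff_zero_one] at this
      have := hAG.homog a ha 0
      rw [homogeneousComponent_zero, hca, map_one] at this
      exact h1I this
    have h2ne : (1 : MvPolynomial (Fin r) k ⧸ (I ⊔ Ideal.span {L})) ≠ 0 := fun h =>
      h1sup (by rw [← Ideal.Quotient.eq_zero_iff_mem]; simpa using h)
    rw [quotPiece_zero, quotPiece_zero, finrank_span_singleton h1ne,
      finrank_span_singleton h2ne]
  | (n + 1) =>
    rw [if_neg (Nat.succ_ne_zero n), Nat.add_sub_cancel]
    exact dim_split I L hAG.homog hfinA hL n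
end

section
/- Let A, d, i be positive integers with d > i. Define s_0 = A and, for 0 <= j <= i, s_{j+1} = ((s_j)_{(d-j)})^{-1}_{-1}. Then s_{i+1} = (A_{(d)})^{-(i+1)}_{-(i+1)}. In particular, for d > 1, (((A_{(d)})^{-1}_{-1})_{(d-1)})^{-1}_{-1} = (A_{(d)})^{-2}_{-2}. -/
/-- `C(m, q)` for integers, with the convention `C(m, q) = 0` whenever `m < q` or `q < 0`. -/
def intChoose (m q : ℤ) : ℕ :=
  if 0 ≤ q ∧ q ≤ m then m.toNat.choose q.toNat else 0

/-- The largest `t` with `C(t, j) ≤ n` (searched below `n + j + 1`, which suffices for `j ≥ 1`). -/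
def topIndex (n j : ℕ) : ℕ :=
  Nat.findGreatest (fun t => Nat.choose t j ≤ n) (n + j)

/-- `binShift n i b a` is `(n_{(i)})^b_a`: writing the (unique, greedily computed)
`i`-binomial expansion `n = C(n_i, i) + C(n_{i-1}, i-1) + ⋯ + C(n_j, j)`
(with `n_i > n_{i-1} > ⋯ > n_j ≥ j ≥ 1`), it is the sum `∑ C(n_t + b, t + a)`,
with the convention `C(m, q) = 0` whenever `m < q` or `q < 0`; it is `0` for `n = 0`. -/
def binShift : ℕ → ℕ → ℤ → ℤ → ℕ
  | _, 0, _, _ => 0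
  | 0, _, _, _ => 0
  | (n+1), (i+1), b, a =>
      intChoose ((topIndex (n+1) (i+1) : ℤ) + b) ((i+1 : ℕ) + a)
        + binShift ((n+1) - Nat.choose (topIndex (n+1) (i+1)) (i+1)) i b a

/-! Write `∂ₑ n = (n_{(e)})^{-1}_{-1}` and let `n = C(t, e) + r`, `r < C(t, e - 1)`, be the first
step of the `e`-binomial expansion of `n`. Then `∂ₑ n = C(t - 1, e - 1) + ∂ₑ₋₁ r` with
`∂ₑ₋₁ r ≤ C(t - 1, e - 2)`. If the inequality is strict, this is again the first step of an
`(e - 1)`-binomial expansion; if it is an equality, the two terms merge into `C(t, e - 1)`, whose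
lowering `C(t - q, e - 1 - q)` splits by Pascal's rule into the two terms of the right-hand side.
Either way induction on `e` gives `((∂ₑ n)_{(e-1)})^{-q}_{-q} = (n_{(e)})^{-(q+1)}_{-(q+1)}` for
`q ≥ 1`, and iterating this identity gives the theorem. -/

theorem intChoose_natCast (a b : ℕ) : intChoose a b = a.choose b := by
  unfold intChoose
  split_ifs with h
  · simp
  · rw [Nat.choose_eq_zero_of_lt (by omega)]

theorem intChoose_of_neg {m q : ℤ} (hq : q < 0) : intChoose m q = 0 := by
  simp only [intChoose]; split_ifs <;> omega

theorem intChoose_of_lt {m q : ℤ} (h : m < q) : intChoose m q = 0 := by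
  simp only [intChoose]; split_ifs <;> omega

theorem intChoose_pascal {m q : ℤ} (h : m ≠ 0 ∨ q ≠ 0) :
    intChoose m q = intChoose (m - 1) (q - 1) + intChoose (m - 1) q := by
  rcases lt_trichotomy q 0 with hq | rfl | hq
  · simp only [intChoose_of_neg hq, intChoose_of_neg (by omega : q - 1 < 0)]
  · rcases lt_or_gt_of_ne (h.resolve_right (by simp)) with hm | hm
    · simp only [intChoose_of_lt hm, intChoose_of_lt (by omega : m - 1 < 0 - 1),
        intChoose_of_lt (by omega : m - 1 < 0)]
    · simp only [intChoose]; split_ifs <;> simp_all <;> omega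
  · rcases le_or_gt m 0 with hm | hm
    · simp only [intChoose_of_lt (by omega : m < q), intChoose_of_lt (by omega : m - 1 < q - 1),
        intChoose_of_lt (by omega : m - 1 < q)]
    · lift m - 1 to ℕ using (by omega) with a ha
      lift q - 1 to ℕ using (by omega) with c hc
      rw [show m = ((a + 1 : ℕ) : ℤ) by omega, show q = ((c + 1 : ℕ) : ℤ) by omega]
      rw [intChoose_natCast, intChoose_natCast, intChoose_natCast, Nat.choose_succ_succ']

@[simp]
theorem binShift_zero (e : ℕ) (b c : ℤ) : binShift 0 e b c = 0 := by
  cases e <;> rfl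

@[simp]
theorem binShift_zero_level (n : ℕ) (b c : ℤ) : binShift n 0 b c = 0 := by
  cases n <;> rfl

theorem add_one_le_choose_add (m e : ℕ) (he : 1 ≤ e) : m + 1 ≤ (m + e).choose e := by
  rw [← Nat.choose_symm_add, ← Nat.choose_succ_self_right]
  exact Nat.choose_le_choose m (by omega)

theorem topIndex_eq_of_choose_le_of_lt {n e t : ℕ} (he : 1 ≤ e) (h₁ : t.choose e ≤ n)
    (h₂ : n < (t + 1).choose e) : topIndex n e = t := by
  refine Nat.findGreatest_eq_iff.2 ⟨?_, fun _ => h₁, fun u htu _ hu => ?_⟩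
  · by_contra! h
    obtain ⟨m, rfl⟩ := Nat.exists_eq_add_of_le' (show e ≤ t by omega)
    have := add_one_le_choose_add m e he
    omega
  · exact absurd (h₂.trans_le (Nat.choose_le_choose e htu)) (not_lt.2 hu)

theorem exists_eq_choose_add {n : ℕ} (hn : 0 < n) (e : ℕ) :
    ∃ t r, e + 1 ≤ t ∧ r < t.choose e ∧ n = t.choose (e + 1) + r := by
  have hex : ∃ t, n < (t + 1).choose (e + 1) :=
    ⟨n + e, by simpa [add_assoc] using add_one_le_choose_add n (e + 1) (by omega)⟩
  set t := Nat.find hex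
  have hlt : n < (t + 1).choose (e + 1) := Nat.find_spec hex
  have hle : t.choose (e + 1) ≤ n := by
    obtain ht | ht := Nat.eq_zero_or_pos t
    · simp [ht]
    · have := Nat.find_min hex (show t - 1 < t by omega)
      rwa [Nat.sub_add_cancel ht, not_lt] at this
  have het : e + 1 ≤ t := by
    by_contra! h
    have : (t + 1).choose (e + 1) ≤ 1 := by
      rcases (Nat.lt_or_eq_of_le h : t + 1 < e + 1 ∨ t + 1 = e + 1) with h | h
      · simp [Nat.choose_eq_zero_of_lt h]
      · simp [h]
    omega
  rw [Nat.choose_succ_succ'] at hlt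
  exact ⟨t, n - t.choose (e + 1), het, by omega, by omega⟩

theorem binShift_choose_add {t e r : ℕ} (b c : ℤ) (ht : e + 1 ≤ t) (hr : r < t.choose e) :
    binShift (t.choose (e + 1) + r) (e + 1) b c =
      intChoose (t + b) ((e + 1 : ℕ) + c) + binShift r e b c := by
  have hpos : 0 < t.choose (e + 1) := Nat.choose_pos ht
  have htop : topIndex (t.choose (e + 1) + r) (e + 1) = t := by
    refine topIndex_eq_of_choose_le_of_lt (by omega) (by omega) ?_
    rw [Nat.choose_succ_succ']
    omega
  obtain ⟨n, hn⟩ : ∃ n, t.choose (e + 1) + r = n + 1 :=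
    ⟨_, (Nat.succ_pred_eq_of_pos (by omega)).symm⟩
  rw [hn] at htop ⊢
  show intChoose _ _ + binShift (n + 1 - _) e b c = _
  rw [htop, ← hn, Nat.add_sub_cancel_left]

theorem binShift_neg_one_choose_add {t e r : ℕ} (ht : e + 1 ≤ t) (hr : r < t.choose e) :
    binShift (t.choose (e + 1) + r) (e + 1) (-1) (-1) =
      (t - 1).choose e + binShift r e (-1) (-1) := by
  rw [binShift_choose_add _ _ ht hr, ← intChoose_natCast]
  congr 2 <;> omega

theorem binShift_choose_self {a e q : ℕ} (hq : 1 ≤ q) (he : e ≤ a) :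
    binShift (a.choose e) e (-q) (-q) = intChoose (a - q) (e - q) := by
  cases e with
  | zero => rw [binShift_zero_level, intChoose_of_neg (by omega)]
  | succ e =>
    rw [← add_zero (a.choose _), binShift_choose_add _ _ he (Nat.choose_pos (by omega)),
      binShift_zero, add_zero]
    congr 1

theorem choose_sub_one_add_choose_sub_one {t : ℕ} (ht : 0 < t) (e : ℕ) :
    (t - 1).choose (e + 1) + (t - 1).choose e = t.choose (e + 1) := by
  rw [add_comm, ← Nat.choose_succ_succ', Nat.sub_add_cancel ht]

theorem binShift_neg_one_le_of_lt_choose {e r s : ℕ} (hr : r < s.choose e) :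
    binShift r e (-1) (-1) ≤ (s - 1).choose (e - 1) := by
  induction e generalizing r s with
  | zero => simp
  | succ e ih =>
    obtain rfl | hr0 := Nat.eq_zero_or_pos r
    · simp
    obtain ⟨t, r, ht, hr', rfl⟩ := exists_eq_choose_add hr0 e
    have hts : t < s := by
      by_contra! h
      have := Nat.choose_le_choose (e + 1) h
      omega
    rw [binShift_neg_one_choose_add ht hr', Nat.add_sub_cancel]
    cases e with
    | zero => simp
    | succ e =>
      calc (t - 1).choose (e + 1) + binShift r (e + 1) (-1) (-1)
          ≤ (t - 1).choose (e + 1) + (t - 1).choose e := by simpa using ih hr'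
        _ = t.choose (e + 1) := choose_sub_one_add_choose_sub_one (by omega) _
        _ ≤ (s - 1).choose (e + 1) := Nat.choose_le_choose _ (by omega)

theorem binShift_binShift_neg_one (n e q : ℕ) (hq : 1 ≤ q) :
    binShift (binShift n e (-1) (-1)) (e - 1) (-q) (-q) =
      binShift n e (-(q + 1 : ℤ)) (-(q + 1 : ℤ)) := by
  induction e generalizing n with
  | zero => simp
  | succ e ih =>
    obtain rfl | hn := Nat.eq_zero_or_pos n
    · simp
    obtain ⟨t, r, ht, hr, rfl⟩ := exists_eq_choose_add hn e
    rw [binShift_neg_one_choose_add ht hr, binShift_choose_add _ _ ht hr, Nat.add_sub_cancel]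
    cases e with
    | zero => rw [intChoose_of_neg (by omega)]; simp
    | succ e =>
      have hrec := ih r
      rw [Nat.add_sub_cancel] at hrec
      rw [← hrec]
      obtain hlt | heq := (binShift_neg_one_le_of_lt_choose hr).lt_or_eq
      · rw [Nat.add_sub_cancel] at hlt
        rw [binShift_choose_add _ _ (by omega) hlt]
        congr 2 <;> omega
      · rw [Nat.add_sub_cancel] at heq
        rw [heq, choose_sub_one_add_choose_sub_one (by omega), binShift_choose_self hq (by omega),
          binShift_choose_self hq (by omega), intChoose_pascal (by omega), add_comm]
        congr 2 <;> omega

theorem binShift_binShift_neg (n e : ℕ) {p q : ℕ} (hp : 1 ≤ p) (hq : 1 ≤ q) :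
    binShift (binShift n e (-p) (-p)) (e - p) (-q) (-q) =
      binShift n e (-(p + q : ℤ)) (-(p + q : ℤ)) := by
  induction p, hp using Nat.le_induction generalizing n e with
  | base => simpa [add_comm] using binShift_binShift_neg_one n e q hq
  | succ p hp ih =>
    have hpq := binShift_binShift_neg_one n e (p + q) (by omega)
    push_cast at hpq ⊢
    rw [← binShift_binShift_neg_one n e p hp, Nat.sub_add_eq, Nat.sub_right_comm, ih, hpq,
      add_right_comm]

theorem stmt_10_general (A d i : ℕ)
    (s : ℕ → ℕ) (hs0 : s 0 = A)
    (hs : ∀ j : ℕ, j ≤ i → s (j + 1) = binShift (s j) (d - j) (-1) (-1)) :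
    s (i + 1) = binShift A d (-(i + 1 : ℤ)) (-(i + 1 : ℤ)) ∧
    binShift (binShift A d (-1) (-1)) (d - 1) (-1) (-1) = binShift A d (-2) (-2) := by
  have hiter : ∀ j ≤ i, s (j + 1) = binShift A d (-(j + 1 : ℤ)) (-(j + 1 : ℤ)) := by
    intro j hj
    induction j with
    | zero => simpa [hs0] using hs 0 hj
    | succ j ih =>
      rw [hs (j + 1) hj, ih (by omega)]
      exact_mod_cast binShift_binShift_neg A d (p := j + 1) (q := 1) (by omega) le_rfl
  refine ⟨hiter i le_rfl, ?_⟩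
  exact_mod_cast binShift_binShift_neg_one A d 1 le_rfl

/-- **Lemma (iterated lowering of a binomial expansion).** Let `A, d, i` be positive integers
with `d > i`. Define `s₀ = A` and `s_{j+1} = ((s_j)_{(d-j)})^{-1}_{-1}` for `0 ≤ j ≤ i`.
Then `s_{i+1} = (A_{(d)})^{-(i+1)}_{-(i+1)}`; in particular (as `d > 1`),
`(((A_{(d)})^{-1}_{-1})_{(d-1)})^{-1}_{-1} = (A_{(d)})^{-2}_{-2}`. -/
theorem stmt_10 (A d i : ℕ) (hA : 1 ≤ A) (hd : 1 ≤ d) (hi : 1 ≤ i) (hdi : i < d)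
    (s : ℕ → ℕ) (hs0 : s 0 = A)
    (hs : ∀ j : ℕ, j ≤ i → s (j + 1) = binShift (s j) (d - j) (-1) (-1)) :
    s (i + 1) = binShift A d (-(i + 1 : ℤ)) (-(i + 1 : ℤ)) ∧
    binShift (binShift A d (-1) (-1)) (d - 1) (-1) (-1) = binShift A d (-2) (-2) :=
  stmt_10_general A d i s hs0 hs
end

section
/- Let e >= 3 and let r be a positive integer. Let m be the largest integer such that m + C(m+e-3, e-1) <= r. Then there exist nonnegative integers a_{e-2} >= a_{e-3} >= ... >= a_1 >= 0, where the inequalities are strict among the positive a_i's, such that r = m + C(m+e-3, e-1) + C(a_{e-2}, e-2) + C(a_{e-3}, e-3) + ... + C(a_1, 1), and moreover a_{e-2} <= m + e - 3 (so each a_i is O(m) as r grows). -/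
/-!
Put `k = e - 2` and `d = r - m - C(m+e-3, e-1)`. By Pascal's rule
`(m+1) + C(m+e-2, e-1) = m + C(m+e-3, e-1) + C(m+e-3, k) + 1`, so maximality of `m` gives
`d ≤ C(m+e-3, k)`. Now expand `d` greedily: take the largest `a_k` with `C(a_k, k) ≤ d`; then
`d < C(a_k + 1, k) = C(a_k, k-1) + C(a_k, k)`, so the remainder is `< C(a_k, k-1)` and its own
greedy digit `a_{k-1}` is `< a_k`. Iterating down to `C(a_1, 1) = a_1` produces the expansion.
Finally `C(a_k, k) ≤ d ≤ C(m+e-3, k)` forces `a_k ≤ m+e-3`.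
-/

open Finset

namespace Nat

theorem lt_choose_add_self {k : ℕ} (hk : 0 < k) (d : ℕ) : d < (d + k).choose k := by
  induction d with
  | zero => simp
  | succ d ih =>
    obtain ⟨j, rfl⟩ : ∃ j, k = j + 1 := ⟨k - 1, by omega⟩
    have hpos : 0 < (d + (j + 1)).choose j := choose_pos (by omega)
    rw [show d + 1 + (j + 1) = d + (j + 1) + 1 by omega, choose_succ_succ']
    omega

theorem exists_choose_le_lt_choose_succ {k : ℕ} (hk : 0 < k) (d : ℕ) :
    ∃ g, g.choose k ≤ d ∧ d < (g + 1).choose k := by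
  have hex : ∃ n : ℕ, d < n.choose k := ⟨d + k, lt_choose_add_self hk d⟩
  have hne : Nat.find hex ≠ 0 := by
    intro h
    have := Nat.find_spec hex
    rw [h, choose_eq_zero_of_lt hk] at this
    omega
  refine ⟨Nat.find hex - 1, not_lt.mp (Nat.find_min hex (by omega)), ?_⟩
  rw [Nat.sub_add_cancel (Nat.pos_of_ne_zero hne)]
  exact Nat.find_spec hex

theorem choose_le_sum_Icc_choose (a : ℕ → ℕ) {k : ℕ} (hk : 0 < k) :
    (a k).choose k ≤ ∑ t ∈ Icc 1 k, (a t).choose t :=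
  single_le_sum (f := fun t => (a t).choose t) (fun _ _ => zero_le _) (right_mem_Icc.mpr hk)

/-- The `k`-binomial expansion of `d`. The bound `d < C(a_k + 1, k)` is the invariant that keeps
the digits strictly increasing when a new top digit is added. -/
theorem exists_choose_expansion {k : ℕ} (hk : 0 < k) (d : ℕ) :
    ∃ a : ℕ → ℕ, StrictMonoOn a (Icc 1 k) ∧ ∑ t ∈ Icc 1 k, (a t).choose t = d ∧
      d < (a k + 1).choose k := by
  induction k, hk using Nat.le_induction generalizing d with
  | base => exact ⟨fun _ => d, fun s hs t ht hst => by simp_all, by simp, by simp⟩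
  | succ k hk ih =>
    obtain ⟨g, hgd, hdg⟩ := exists_choose_le_lt_choose_succ (by omega : 0 < k + 1) d
    have hrem : d - g.choose (k + 1) < g.choose k := by
      rw [choose_succ_succ'] at hdg
      omega
    obtain ⟨b, hb_mono, hb_sum, -⟩ := ih (d - g.choose (k + 1))
    have hbg : b k < g :=
      (choose_mono k).reflect_lt ((hb_sum ▸ choose_le_sum_Icc_choose b hk).trans_lt hrem)
    have hb_le : ∀ s ∈ Icc 1 k, b s ≤ b k := fun s hs =>
      hb_mono.monotoneOn hs (right_mem_Icc.mpr hk) (mem_Icc.mp hs).2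
    refine ⟨Function.update b (k + 1) g, ?_, ?_, by rwa [Function.update_self]⟩
    · intro s hs t ht hst
      simp only [coe_Icc, Set.mem_Icc] at hs ht
      rw [Function.update_of_ne (by omega)]
      rcases eq_or_ne t (k + 1) with rfl | htk
      · rw [Function.update_self]
        exact (hb_le s (mem_Icc.mpr ⟨hs.1, by omega⟩)).trans_lt hbg
      · rw [Function.update_of_ne htk]
        exact hb_mono (mem_Icc.mpr ⟨hs.1, by omega⟩) (mem_Icc.mpr ⟨ht.1, by omega⟩) hst
    · rw [sum_Icc_succ_top (by omega), Function.update_self,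
        sum_congr rfl fun t ht => by rw [Function.update_of_ne (by simp at ht; omega)], hb_sum]
      omega

theorem choose_succ_lt_succ_choose_succ {n k : ℕ} (h : k ≤ n) :
    n.choose (k + 1) < (n + 1).choose (k + 1) := by
  rw [choose_succ_succ']
  have := choose_pos h
  omega

theorem le_of_choose_succ_le_choose_succ {a n k : ℕ} (hk : k ≤ n)
    (h : a.choose (k + 1) ≤ n.choose (k + 1)) : a ≤ n := by
  by_contra! hna
  exact (choose_succ_lt_succ_choose_succ hk).not_ge ((choose_le_choose _ hna).trans h)

end Nat

theorem stmt_11_general (e : ℕ) (he : 3 ≤ e) (r : ℕ) (m : ℕ)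
    (hm : m + Nat.choose (m + e - 3) (e - 1) ≤ r)
    (hmax : ∀ m' : ℕ, m' + Nat.choose (m' + e - 3) (e - 1) ≤ r → m' ≤ m) :
    ∃ a : ℕ → ℕ,
      (∀ s t : ℕ, 1 ≤ s → s ≤ t → t ≤ e - 2 → a s ≤ a t) ∧
      (∀ s t : ℕ, 1 ≤ s → s < t → t ≤ e - 2 → 0 < a s → a s < a t) ∧
      r = m + Nat.choose (m + e - 3) (e - 1) + ∑ t ∈ Finset.Icc 1 (e - 2), Nat.choose (a t) t ∧
      a (e - 2) ≤ m + e - 3 := by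
  obtain ⟨f, rfl⟩ : ∃ f, e = f + 3 := ⟨e - 3, by omega⟩
  simp only [show m + (f + 3) - 3 = m + f by omega, show f + 3 - 1 = f + 2 by omega,
    show f + 3 - 2 = f + 1 by omega] at hm ⊢
  set d := r - (m + (m + f).choose (f + 2)) with hd_def
  have hd : d ≤ (m + f).choose (f + 1) := by
    by_contra! hd
    have hpascal : (m + f + 1).choose (f + 2) = (m + f).choose (f + 1) + (m + f).choose (f + 2) :=
      Nat.choose_succ_succ' _ _
    have := hmax (m + 1) (by
      rw [show m + 1 + (f + 3) - 3 = m + f + 1 by omega, show f + 3 - 1 = f + 2 by omega]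
      omega)
    omega
  obtain ⟨a, ha_mono, ha_sum, -⟩ := Nat.exists_choose_expansion (by omega : 0 < f + 1) d
  have ha_top : (a (f + 1)).choose (f + 1) ≤ d :=
    ha_sum ▸ Nat.choose_le_sum_Icc_choose a f.succ_pos
  refine ⟨a, fun s t hs hst ht => ha_mono.monotoneOn ?_ ?_ hst,
    fun s t hs hst ht _ => ha_mono ?_ ?_ hst, by omega,
    Nat.le_of_choose_succ_le_choose_succ (by omega) (ha_top.trans hd)⟩ <;>
    simp only [coe_Icc, Set.mem_Icc] <;> omega

/-- **Lemma (decomposition of `r`).** Let `e ≥ 3` and let `r` be a positive integer. Let `m`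
be the largest integer with `m + C(m+e-3, e-1) ≤ r`. Then there are nonnegative integers
`a_{e-2} ≥ a_{e-3} ≥ ⋯ ≥ a_1 ≥ 0` (the inequalities being strict among the positive ones)
with `r = m + C(m+e-3, e-1) + C(a_{e-2}, e-2) + ⋯ + C(a_1, 1)`, and moreover
`a_{e-2} ≤ m + e - 3` (so each `a_t` is `O(m)` as `r` grows). -/
theorem stmt_11 (e : ℕ) (he : 3 ≤ e) (r : ℕ) (hr : 1 ≤ r) (m : ℕ)
    (hm : m + Nat.choose (m + e - 3) (e - 1) ≤ r)
    (hmax : ∀ m' : ℕ, m' + Nat.choose (m' + e - 3) (e - 1) ≤ r → m' ≤ m) :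
    ∃ a : ℕ → ℕ,
      (∀ s t : ℕ, 1 ≤ s → s ≤ t → t ≤ e - 2 → a s ≤ a t) ∧
      (∀ s t : ℕ, 1 ≤ s → s < t → t ≤ e - 2 → 0 < a s → a s < a t) ∧
      r = m + Nat.choose (m + e - 3) (e - 1) + ∑ t ∈ Finset.Icc 1 (e - 2), Nat.choose (a t) t ∧
      a (e - 2) ≤ m + e - 3 :=
  stmt_11_general e he r m hm hmax
end
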